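/- Let k be a field, let f and g be polynomials in one variable over k, suppose f and g are coprime, and suppose that the derivative g′ of g is nonzero. Then for every constant C ∈ k one has f′·g − g′·f ≠ C·g². -/

import Mathlib

open Polynomial

theorem IsCoprime.derivative_eq_zero_of_dvd_wronskian {R : Type*} [CommRing R]
    [NoZeroDivisors R] {a b : R[X]} (hc : IsCoprime a b) (h : b ∣ wronskian a b) :
    derivative b = 0 := by
  have hb : b ∣ a * derivative b := by
    simpa [wronskian] using h.add (dvd_mul_left b (derivative a))
  exact dvd_derivative_iff.mp (hc.symm.dvd_of_dvd_mul_left hb)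

/-- If `f, g ∈ k[X]` are coprime and `g′ ≠ 0`, then for every constant `C ∈ k`
one has `f′·g − g′·f ≠ C·g²`. -/
theorem derivative_cross_ne_const_mul_sq {k : Type*} [Field k]
    (f g : Polynomial k) (hco : IsCoprime f g)
    (hg : Polynomial.derivative g ≠ 0) (C : k) :
    Polynomial.derivative f * g - Polynomial.derivative g * f ≠
      Polynomial.C C * g ^ 2 := by
  intro h
  have hw : wronskian f g = -(Polynomial.C C * g ^ 2) := by
    rw [← h, wronskian]
    ring
  have hdvd : g ∣ wronskian f g := hw ▸ (Dvd.intro (Polynomial.C C * g) (by ring)).neg_right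
  exact hg (hco.derivative_eq_zero_of_dvd_wronskian hdvd)
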